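/- arXiv:1305.4080 — 2 statements merged into one kernel-verified Lean document; each statement's English description precedes it below -/
import Mathlib

section
/- Let H be a real Hilbert space with inner product a(·,·) and norm ⟦|·|⟧, let (·,·) denote a second inner product on H with norm ‖·‖, let β ≥ 0, λ ∈ ℝ, and suppose u, w ∈ H with ‖u‖ = ‖w‖ = 1 and a(u, φ) + β (N(u), φ) = λ (u, φ) for all φ ∈ H, where N : H → H is a map with (N(u), u) well-defined. Define E(v) := (1/2) a(v,v) + (β/4) Q(v), where Q : H → ℝ satisfies Q(u) = (N(u), u) and, in the concrete GPE setting, Q(v) = ∫ |v|^4 and N(u) = |u|^2 u. Then in the concrete setting (H = H^1_0(Ω), a the elliptic form, (·,·) the L^2 inner product) the identity holds: E(w) - E(u) = (1/2) a(w-u, w-u) + (β/2)(u^2 (w-u), w-u)_{L^2} + (β/4) ∫_Ω (u^4 - 2 u^2 w^2 + w^4) dx - (λ/2) ‖w - u‖_{L^2}^2. -/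
open MeasureTheory

/-! Writing `w = u + (w - u)`, the difference `E w - E u` is
`½ a(w-u, w-u) + (β/2)(u²(w-u), w-u) + (β/4)∫(u² - w²)²` plus the first variation
`a(u, w-u) + β (u³, w-u)` of `E` at `u`. By the Euler–Lagrange equation the first variation is
`λ (u, w-u)`, and since `‖w‖ = ‖u‖` we have `2 (u, w-u) = -‖w-u‖²`. -/

theorem LinearMap.BilinForm.IsSymm.apply_self_sub_apply_self {R M : Type*} [CommRing R]
    [AddCommGroup M] [Module R M] {B : LinearMap.BilinForm R M} (hB : B.IsSymm) (x y : M) :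
    B x x - B y y = B (x - y) (x - y) + 2 * B y (x - y) := by
  simp only [map_sub, LinearMap.sub_apply, hB.eq x y]
  ring

section Expansion

variable {α : Type*} [MeasurableSpace α] {μ : Measure α} {u w : α → ℝ}

theorem integral_sq_sub_integral_sq (hu : Integrable (fun x => u x ^ 2) μ)
    (hmul : Integrable (fun x => u x * (w x - u x)) μ) (hw : Integrable (fun x => w x ^ 2) μ) :
    ∫ x, w x ^ 2 ∂μ - ∫ x, u x ^ 2 ∂μ =
      ∫ x, (w x - u x) ^ 2 ∂μ + 2 * ∫ x, u x * (w x - u x) ∂μ := by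
  have hsq : Integrable (fun x => (w x - u x) ^ 2) μ :=
    ((hw.sub (hmul.const_mul 2)).sub hu).congr
      (ae_of_all _ fun x => by simp only [Pi.sub_apply]; ring)
  rw [← integral_sub hw hu, ← integral_const_mul, ← integral_add hsq (hmul.const_mul 2)]
  exact integral_congr_ae (ae_of_all _ fun x => by ring)

theorem integral_pow_four_sub_integral_pow_four (hu : Integrable (fun x => u x ^ 4) μ)
    (hcub : Integrable (fun x => u x ^ 3 * (w x - u x)) μ)
    (h22 : Integrable (fun x => u x ^ 2 * w x ^ 2) μ) (hw : Integrable (fun x => w x ^ 4) μ) :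
    ∫ x, w x ^ 4 ∂μ - ∫ x, u x ^ 4 ∂μ =
      2 * ∫ x, u x ^ 2 * (w x - u x) ^ 2 ∂μ +
        ∫ x, (u x ^ 4 - 2 * u x ^ 2 * w x ^ 2 + w x ^ 4) ∂μ +
          4 * ∫ x, u x ^ 3 * (w x - u x) ∂μ := by
  have hsq : Integrable (fun x => u x ^ 2 * (w x - u x) ^ 2) μ :=
    ((h22.sub (hcub.const_mul 2)).sub hu).congr
      (ae_of_all _ fun x => by simp only [Pi.sub_apply]; ring)
  have hquart : Integrable (fun x => u x ^ 4 - 2 * u x ^ 2 * w x ^ 2 + w x ^ 4) μ :=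
    ((hu.sub (h22.const_mul 2)).add hw).congr
      (ae_of_all _ fun x => by simp only [Pi.add_apply, Pi.sub_apply]; ring)
  calc ∫ x, w x ^ 4 ∂μ - ∫ x, u x ^ 4 ∂μ
      = ∫ x, (2 * (u x ^ 2 * (w x - u x) ^ 2) + (u x ^ 4 - 2 * u x ^ 2 * w x ^ 2 + w x ^ 4)) +
          4 * (u x ^ 3 * (w x - u x)) ∂μ := by
        rw [← integral_sub hw hu]
        exact integral_congr_ae (ae_of_all _ fun x => by ring)
    _ = _ := by
        rw [integral_add ((hsq.const_mul 2).fun_add hquart) (hcub.const_mul 4),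
          integral_add (hsq.const_mul 2) hquart, integral_const_mul, integral_const_mul]

end Expansion

theorem gpe_energy_difference_identity_general
    (d : ℕ)
    (Ω : Set (EuclideanSpace ℝ (Fin d)))
    (a : (EuclideanSpace ℝ (Fin d) → ℝ) →ₗ[ℝ] (EuclideanSpace ℝ (Fin d) → ℝ) →ₗ[ℝ] ℝ)
    (hsymm : ∀ v v', a v v' = a v' v)
    (β lam : ℝ)
    (u w : EuclideanSpace ℝ (Fin d) → ℝ)
    (hInt : ∀ i j : ℕ, i + j ≤ 4 →
      Integrable (fun x => u x ^ i * w x ^ j) (volume.restrict Ω))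
    (hunorm : (∫ x in Ω, u x ^ 2) = 1) (hwnorm : (∫ x in Ω, w x ^ 2) = 1)
    (hEL : ∀ φ : EuclideanSpace ℝ (Fin d) → ℝ,
      Integrable (fun x => u x ^ 3 * φ x) (volume.restrict Ω) →
      Integrable (fun x => u x * φ x) (volume.restrict Ω) →
      a u φ + β * ∫ x in Ω, u x ^ 3 * φ x = lam * ∫ x in Ω, u x * φ x)
    (E : (EuclideanSpace ℝ (Fin d) → ℝ) → ℝ)
    (hE : ∀ v, E v = 1 / 2 * a v v + β / 4 * ∫ x in Ω, v x ^ 4) :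
    E w - E u =
      1 / 2 * a (w - u) (w - u) +
        β / 2 * (∫ x in Ω, u x ^ 2 * (w x - u x) ^ 2) +
          β / 4 * (∫ x in Ω, (u x ^ 4 - 2 * u x ^ 2 * w x ^ 2 + w x ^ 4)) -
            lam / 2 * (∫ x in Ω, (w x - u x) ^ 2) := by
  have h40 : Integrable (fun x => u x ^ 4) (volume.restrict Ω) := by simpa using hInt 4 0 le_rfl
  have h20 : Integrable (fun x => u x ^ 2) (volume.restrict Ω) := by
    simpa using hInt 2 0 (by norm_num)
  have hcub : Integrable (fun x => u x ^ 3 * (w x - u x)) (volume.restrict Ω) :=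
    ((hInt 3 1 le_rfl).sub h40).congr (ae_of_all _ fun x => by simp only [Pi.sub_apply]; ring)
  have hmul : Integrable (fun x => u x * (w x - u x)) (volume.restrict Ω) :=
    ((hInt 1 1 (by norm_num)).sub h20).congr
      (ae_of_all _ fun x => by simp only [Pi.sub_apply]; ring)
  have hquad := (LinearMap.BilinForm.isSymm_def.mpr hsymm).apply_self_sub_apply_self w u
  have hquart := integral_pow_four_sub_integral_pow_four h40 hcub (hInt 2 2 le_rfl)
    (by simpa using hInt 0 4 le_rfl)
  have hL2 := integral_sq_sub_integral_sq h20 hmul (by simpa using hInt 0 2 (by norm_num))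
  rw [hunorm, hwnorm, sub_self] at hL2
  have hvar : a u (w - u) + β * ∫ x in Ω, u x ^ 3 * (w x - u x) =
      lam * ∫ x in Ω, u x * (w x - u x) :=
    hEL (w - u) hcub hmul
  rw [hE w, hE u]
  linear_combination (1 / 2) * hquad + β / 4 * hquart + hvar - lam / 2 * hL2

/-- Energy difference identity (24) for the Gross–Pitaevskii functional:
`E(w) - E(u) = ½ a(w-u,w-u) + (β/2)(u²(w-u), w-u) + (β/4)∫(u⁴-2u²w²+w⁴) - (λ/2)‖w-u‖²`
for the ground state `u` and any `L²`-normalized `w`. -/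
theorem gpe_energy_difference_identity
    (d : ℕ) (hd : d ≤ 3)
    (Ω : Set (EuclideanSpace ℝ (Fin d))) (hΩo : IsOpen Ω)
    (hΩb : Bornology.IsBounded Ω)
    (a : (EuclideanSpace ℝ (Fin d) → ℝ) →ₗ[ℝ] (EuclideanSpace ℝ (Fin d) → ℝ) →ₗ[ℝ] ℝ)
    (hsymm : ∀ v v', a v v' = a v' v)
    (β lam : ℝ) (hβ : 0 ≤ β)
    (u w : EuclideanSpace ℝ (Fin d) → ℝ)
    (hInt : ∀ i j : ℕ, i + j ≤ 4 →
      Integrable (fun x => u x ^ i * w x ^ j) (volume.restrict Ω))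
    (hunorm : (∫ x in Ω, u x ^ 2) = 1) (hwnorm : (∫ x in Ω, w x ^ 2) = 1)
    (hEL : ∀ φ : EuclideanSpace ℝ (Fin d) → ℝ,
      Integrable (fun x => u x ^ 3 * φ x) (volume.restrict Ω) →
      Integrable (fun x => u x * φ x) (volume.restrict Ω) →
      a u φ + β * ∫ x in Ω, u x ^ 3 * φ x = lam * ∫ x in Ω, u x * φ x)
    (E : (EuclideanSpace ℝ (Fin d) → ℝ) → ℝ)
    (hE : ∀ v, E v = 1 / 2 * a v v + β / 4 * ∫ x in Ω, v x ^ 4) :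
    E w - E u =
      1 / 2 * a (w - u) (w - u) +
        β / 2 * (∫ x in Ω, u x ^ 2 * (w x - u x) ^ 2) +
          β / 4 * (∫ x in Ω, (u x ^ 4 - 2 * u x ^ 2 * w x ^ 2 + w x ^ 4)) -
            lam / 2 * (∫ x in Ω, (w x - u x) ^ 2) :=
  gpe_energy_difference_identity_general d Ω a hsymm β lam u w hInt hunorm hwnorm hEL E hE
end

section
/- Let H be a real Hilbert space with inner products a(·,·) and (·,·)_{L^2}, and let I : H → H be a linear map with I ∘ I = I (a projection-type interpolation) satisfying the estimate ‖v − I v‖_{L^2} ≤ C H ⟦|v|⟧ for all v ∈ H, where ⟦|v|⟧ = √(a(v,v)). Let V_c, V_f ⊂ H be subspaces with I v_f = 0 for all v_f ∈ V_f and (v_H, v_f)_{L^2} = 0 for all v_H in the range of I and v_f ∈ V_f. Then for all v_c ∈ V_c ⊂ H and v_f ∈ V_f: (v_c, v_f)_{L^2} = (v_c − I v_c, v_f − I v_f)_{L^2} ≤ C^2 H^2 ⟦|v_c|⟧ ⟦|v_f|⟧. -/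
/-! Since `I` kills `V_f` and its range is `b`-orthogonal to `V_f`, subtracting `I` from both
arguments of `b(v_c, v_f)` changes nothing; Cauchy–Schwarz for `b` and the interpolation error
bound applied to each factor then give `C² H²`. -/

namespace LinearMap

lemma apply_eq_apply_sub_apply_sub {R M P : Type*} [CommRing R] [AddCommGroup M] [Module R M]
    [AddCommGroup P] [Module R P] (b : M →ₗ[R] M →ₗ[R] P) (I : M →ₗ[R] M) {v w : M}
    (hw : I w = 0) (horth : b (I v) w = 0) :
    b v w = b (v - I v) (w - I w) := by
  rw [hw, sub_zero, map_sub, sub_apply, horth, sub_zero]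

namespace BilinForm

lemma apply_le_sqrt_mul_sqrt {M : Type*} [AddCommGroup M] [Module ℝ M] (B : LinearMap.BilinForm ℝ M)
    (hs : ∀ x, 0 ≤ B x x) (hB : LinearMap.IsSymm B) (x y : M) :
    B x y ≤ √(B x x) * √(B y y) := by
  rw [← Real.sqrt_mul (hs x)]
  exact (le_abs_self _).trans (Real.abs_le_sqrt (B.apply_sq_le_of_symm hs hB x y))

end BilinForm

end LinearMap

theorem quasi_orthogonality_general
    {V : Type*} [AddCommGroup V] [Module ℝ V]
    (a b : V →ₗ[ℝ] V →ₗ[ℝ] ℝ)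
    (hbsymm : ∀ v w, b v w = b w v)
    (hbnonneg : ∀ v, 0 ≤ b v v)
    (C HH : ℝ)
    (I : V →ₗ[ℝ] V)
    (hIerr : ∀ v, Real.sqrt (b (v - I v) (v - I v)) ≤ C * HH * Real.sqrt (a v v))
    (Vc Vf : Submodule ℝ V)
    (hker : ∀ vf ∈ Vf, I vf = 0)
    (horth : ∀ (v : V), ∀ vf ∈ Vf, b (I v) vf = 0) :
    ∀ vc ∈ Vc, ∀ vf ∈ Vf,
      b vc vf = b (vc - I vc) (vf - I vf) ∧
        b vc vf ≤ C ^ 2 * HH ^ 2 * Real.sqrt (a vc vc) * Real.sqrt (a vf vf) := by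
  intro vc _ vf hvf
  have hsplit : b vc vf = b (vc - I vc) (vf - I vf) :=
    b.apply_eq_apply_sub_apply_sub I (hker vf hvf) (horth vc vf hvf)
  refine ⟨hsplit, ?_⟩
  calc b vc vf = b (vc - I vc) (vf - I vf) := hsplit
    _ ≤ √(b (vc - I vc) (vc - I vc)) * √(b (vf - I vf) (vf - I vf)) :=
        LinearMap.BilinForm.apply_le_sqrt_mul_sqrt b hbnonneg ⟨fun x y => hbsymm x y⟩ _ _
    _ ≤ (C * HH * √(a vc vc)) * (C * HH * √(a vf vf)) :=
        mul_le_mul (hIerr vc) (hIerr vf) (Real.sqrt_nonneg _)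
          ((Real.sqrt_nonneg _).trans (hIerr vc))
    _ = C ^ 2 * HH ^ 2 * √(a vc vc) * √(a vf vf) := by ring

/-- Abstract `L²`-quasi-orthogonality (estimate (16)): if the interpolation `I`
vanishes on `V_f`, its range is `b`-orthogonal to `V_f`, and the interpolation
error bound `‖v − Iv‖_b ≤ C·H·⟦|v|⟧` holds (with `⟦|v|⟧ = √(a(v,v))`), then
`b(v_c, v_f) = b(v_c − I v_c, v_f − I v_f) ≤ C²H²⟦|v_c|⟧⟦|v_f|⟧`. -/
theorem quasi_orthogonality
    {V : Type*} [AddCommGroup V] [Module ℝ V]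
    (a b : V →ₗ[ℝ] V →ₗ[ℝ] ℝ)
    (hbsymm : ∀ v w, b v w = b w v)
    (hbnonneg : ∀ v, 0 ≤ b v v)
    (hanonneg : ∀ v, 0 ≤ a v v)
    (C HH : ℝ) (hC : 0 ≤ C) (hH : 0 ≤ HH)
    (I : V →ₗ[ℝ] V) (hIproj : ∀ v, I (I v) = I v)
    (hIerr : ∀ v, Real.sqrt (b (v - I v) (v - I v)) ≤ C * HH * Real.sqrt (a v v))
    (Vc Vf : Submodule ℝ V)
    (hker : ∀ vf ∈ Vf, I vf = 0)
    (horth : ∀ (v : V), ∀ vf ∈ Vf, b (I v) vf = 0) :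
    ∀ vc ∈ Vc, ∀ vf ∈ Vf,
      b vc vf = b (vc - I vc) (vf - I vf) ∧
        b vc vf ≤ C ^ 2 * HH ^ 2 * Real.sqrt (a vc vc) * Real.sqrt (a vf vf) :=
  quasi_orthogonality_general a b hbsymm hbnonneg C HH I hIerr Vc Vf hker horth
end
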